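/- For integers a ≤ 0 < b, the sublattice index of the polytope F̃_2(a,b) = conv({(0,0,a),(0,0,b),(-1,-1,1),(1,-1,0),(-1,1,0)}) equals 2; specifically, the affine lattice generated by its lattice points is {(x,y,z) ∈ Z^3 : x + y ≡ 0 (mod 2)}. -/
import Mathlib

/-- The subgroup of `ℤ³` generated by all differences of lattice points of `P`. -/
def diffLat (A : Set (Fin 3 → ℤ)) : AddSubgroup (Fin 3 → ℤ) :=
  AddSubgroup.closure {v | ∃ x ∈ A, ∃ y ∈ A, v = x - y}

/-- The sublattice `{(x,y,z) ∈ ℤ³ : x + y ≡ 0 (mod 2)}`. -/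
def mod2Lat : AddSubgroup (Fin 3 → ℤ) where
  carrier := {v | (2 : ℤ) ∣ v 0 + v 1}
  zero_mem' := by simp
  add_mem' := by
    intro a b ha hb
    simpa [add_add_add_comm] using dvd_add ha hb
  neg_mem' := by
    intro a ha
    have : (2 : ℤ) ∣ -(a 0 + a 1) := dvd_neg.2 ha
    show (2 : ℤ) ∣ -a 0 + -a 1
    rw [← neg_add]
    exact this

/-- The lattice points of `F̃₂(a,b)`. -/
def F2Pts (a b : ℤ) : Set (Fin 3 → ℤ) :=
  {v | ∃ t : ℤ, a ≤ t ∧ t ≤ b ∧ v = ![0, 0, t]} ∪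
  {![-1, -1, 1], ![1, -1, 0], ![-1, 1, 0]}

def phi2 : (Fin 3 → ℤ) →+ ZMod 2 where
  toFun v := ((v 0 + v 1 : ℤ) : ZMod 2)
  map_zero' := by simp
  map_add' := by intro x y; show (((x+y) 0 + (x+y) 1 : ℤ) : ZMod 2) = _; push_cast [Pi.add_apply]; ring

lemma mod2Lat_eq_ker : mod2Lat = phi2.ker := by
  ext v
  show (2 : ℤ) ∣ v 0 + v 1 ↔ _
  rw [AddMonoidHom.mem_ker]
  show _ ↔ ((v 0 + v 1 : ℤ) : ZMod 2) = 0
  rw [ZMod.intCast_zmod_eq_zero_iff_dvd]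
  norm_num

theorem stmt8 (a b : ℤ) (ha : a ≤ 0) (hb : 0 < b) :
    diffLat (F2Pts a b) = mod2Lat ∧ mod2Lat.index = 2 := by
  constructor
  · apply le_antisymm
    · apply AddSubgroup.closure_le _ |>.2
      rintro v ⟨x, hx, y, hy, rfl⟩
      have key : ∀ w ∈ F2Pts a b, (2 : ℤ) ∣ w 0 + w 1 := by
        rintro w (⟨t, _, _, rfl⟩ | h)
        · simp
        · rcases h with h | h | h <;> subst h <;> decide
      have hx2 := key x hx
      have hy2 := key y hy
      show (2 : ℤ) ∣ (x - y) 0 + (x - y) 1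
      simp only [Pi.sub_apply]
      omega
    · -- mod2Lat ≤ diffLat
      have h00 : (![0,0,0] : Fin 3 → ℤ) ∈ F2Pts a b := Or.inl ⟨0, ha, hb.le, rfl⟩
      have h01 : (![0,0,1] : Fin 3 → ℤ) ∈ F2Pts a b := Or.inl ⟨1, ha.trans zero_le_one, hb, rfl⟩
      have hA : (![-1,-1,1] : Fin 3 → ℤ) ∈ F2Pts a b := Or.inr (Or.inl rfl)
      have hB : (![1,-1,0] : Fin 3 → ℤ) ∈ F2Pts a b := Or.inr (Or.inr (Or.inl rfl))
      have g1 : (![1,1,0] : Fin 3 → ℤ) ∈ diffLat (F2Pts a b) := by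
        apply AddSubgroup.subset_closure
        exact ⟨![0,0,1], h01, ![-1,-1,1], hA, by funext i; fin_cases i <;> decide⟩
      have g2 : (![1,-1,0] : Fin 3 → ℤ) ∈ diffLat (F2Pts a b) := by
        apply AddSubgroup.subset_closure
        exact ⟨![1,-1,0], hB, ![0,0,0], h00, by funext i; fin_cases i <;> decide⟩
      have g3 : (![0,0,1] : Fin 3 → ℤ) ∈ diffLat (F2Pts a b) := by
        apply AddSubgroup.subset_closure
        exact ⟨![0,0,1], h01, ![0,0,0], h00, by funext i; fin_cases i <;> decide⟩
      intro v hv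
      obtain ⟨k, hk⟩ := hv
      have hv_eq : v = k • (![1,1,0] : Fin 3 → ℤ) + (v 0 - k) • (![1,-1,0] : Fin 3 → ℤ)
          + (v 2) • (![0,0,1] : Fin 3 → ℤ) := by
        funext i
        fin_cases i <;>
          simp [Matrix.cons_val_zero, Matrix.cons_val_one] <;> omega
      rw [hv_eq]
      exact add_mem (add_mem (AddSubgroup.zsmul_mem _ g1 k)
        (AddSubgroup.zsmul_mem _ g2 _)) (AddSubgroup.zsmul_mem _ g3 _)
  · rw [mod2Lat_eq_ker, AddSubgroup.index_ker]
    have hs : Function.Surjective phi2 := by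
      intro c
      obtain ⟨n, hn⟩ := ZMod.intCast_surjective (n := 2) c
      exact ⟨![n, 0, 0], by simp [phi2, hn]⟩
    have : phi2.range = ⊤ := AddMonoidHom.range_eq_top.2 hs
    rw [this, AddSubgroup.card_top, Nat.card_zmod]
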